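/- Suppose there is a finite partition 𝒟* of a metric space X such that for every n the collection of maximal ≿_n-domains relative to X equals 𝒟*, and the closed graphs of ≿_n converge in the Hausdorff metric to the graph of ≿, with compact sets K_n → K. Then the collection of maximal ≿-domains relative to K is {D ∩ K : D ∈ 𝒟*, D ∩ K ≠ ∅}, and every Hausdorff limit of a sequence of maximal ≿_n-domains relative to K_n is a maximal ≿-domain relative to K. -/

import Mathlib

open Filter
open scoped ENNReal

/-- `R` is complete on `A`. -/
def CompleteOn {X : Type*} (R : X → X → Prop) (A : Set X) : Prop :=
  ∀ x ∈ A, ∀ y ∈ A, R x y ∨ R y x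

/-- `A` is a maximal `R`-domain relative to `B`. -/
def MaxDomainRel {X : Type*} (R : X → X → Prop) (B A : Set X) : Prop :=
  A ⊆ B ∧ CompleteOn R A ∧ ∀ A' : Set X, A ⊆ A' → A' ⊆ B → CompleteOn R A' → A' = A

/-!
Every block of `𝒟` is a maximal `≿ₙ`-domain, hence closed (the closure of a complete set is
complete for a relation with closed graph), hence also open, the partition being finite.
Under `≿ₙ` every block is complete and points of different blocks are incomparable. Both
properties say that a graph contains, resp. lies in, a fixed closed set (each `D ×ˢ D` lies in the
symmetrized graph; the graph lies in `⋃ D ×ˢ D`), so they pass to the Hausdorff limit `≿`. For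
such a relation the maximal domains relative to any `K` are the nonempty traces `D ∩ K`.
A Hausdorff limit `Dl` of maximal domains `Dₙ = Bₙ ∩ Kₙ` is complete and contained in `Kl`, so it
lies in one block `B`. Since `B` is open, `Bₙ = B` eventually, and then every point of `B ∩ Kl` is
a limit of points of `Dₙ`; hence `Dl = B ∩ Kl`.
-/

open Set Metric Topology

section Hausdorff

variable {α ι : Type*} [PseudoEMetricSpace α] {l : Filter ι} {x : α} {s : ι → Set α}
  {t : Set α}

lemma mem_of_tendsto_infEDist [l.NeBot] (ht : IsClosed t)
    (hx : Tendsto (fun i => infEDist x (s i)) l (𝓝 0))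
    (hs : Tendsto (fun i => hausdorffEDist (s i) t) l (𝓝 0)) : x ∈ t := by
  have hlim : Tendsto (fun i => infEDist x (s i) + hausdorffEDist (s i) t) l (𝓝 0) := by
    simpa using hx.add hs
  have : infEDist x t ≤ 0 :=
    ge_of_tendsto' hlim fun _ => infEDist_le_infEDist_add_hausdorffEDist
  exact (mem_iff_infEDist_zero_of_closed ht).2 (nonpos_iff_eq_zero.1 this)

lemma tendsto_infEDist_of_mem (hx : x ∈ t)
    (hs : Tendsto (fun i => hausdorffEDist (s i) t) l (𝓝 0)) :
    Tendsto (fun i => infEDist x (s i)) l (𝓝 0) :=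
  tendsto_of_tendsto_of_tendsto_of_le_of_le tendsto_const_nhds hs (fun _ => zero_le)
    fun _ => hausdorffEDist_comm (s := s _) ▸ infEDist_le_hausdorffEDist_of_mem hx

lemma subset_of_tendsto_hausdorffEDist [l.NeBot] {u : ι → Set α} {v : Set α}
    (hsu : ∀ i, s i ⊆ u i) (hv : IsClosed v)
    (hs : Tendsto (fun i => hausdorffEDist (s i) t) l (𝓝 0))
    (hu : Tendsto (fun i => hausdorffEDist (u i) v) l (𝓝 0)) : t ⊆ v := fun _ hx =>
  mem_of_tendsto_infEDist hv
    (tendsto_of_tendsto_of_tendsto_of_le_of_le tendsto_const_nhds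
      (tendsto_infEDist_of_mem hx hs) (fun _ => zero_le) fun i => infEDist_anti (hsu i))
    hu

lemma tendsto_infEDist_inter {n : Set α} (hn : n ∈ 𝓝 x)
    (hx : Tendsto (fun i => infEDist x (s i)) l (𝓝 0)) :
    Tendsto (fun i => infEDist x (n ∩ s i)) l (𝓝 0) := by
  obtain ⟨r, hr, hrn⟩ := EMetric.mem_nhds_iff.1 hn
  refine ENNReal.tendsto_nhds_zero.2 fun ε hε => ?_
  filter_upwards [hx.eventually (gt_mem_nhds (lt_min hε hr))] with i hi
  obtain ⟨y, hy, hxy⟩ := infEDist_lt_iff.1 hi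
  have hyn : y ∈ n := hrn (by rw [mem_eball, edist_comm]; exact hxy.trans_le (min_le_right _ _))
  exact (infEDist_le_edist_of_mem (show y ∈ n ∩ s i from ⟨hyn, hy⟩)).trans
    (hxy.le.trans (min_le_left _ _))

lemma hausdorffEDist_union_preimage_swap_le {G H : Set (α × α)} :
    hausdorffEDist (G ∪ Prod.swap ⁻¹' G) (H ∪ Prod.swap ⁻¹' H) ≤ hausdorffEDist G H := by
  have hswap : Isometry (Prod.swap : α × α → α × α) := fun p q => by
    simp only [Prod.edist_eq, Prod.fst_swap, Prod.snd_swap, max_comm]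
  refine hausdorffEDist_union_le.trans (max_le le_rfl ?_)
  rw [← image_swap_eq_preimage_swap, hausdorffEDist_image hswap]

end Hausdorff

lemma tendsto_hausdorffEDist_of_tendsto_hausdorffDist {α ι : Type*} [PseudoMetricSpace α]
    {l : Filter ι} {s : ι → Set α} {t : Set α} (hs : ∀ i, (s i).Nonempty)
    (hsb : ∀ i, Bornology.IsBounded (s i)) (ht : t.Nonempty) (htb : Bornology.IsBounded t)
    (h : Tendsto (fun i => hausdorffDist (s i) t) l (𝓝 0)) :
    Tendsto (fun i => hausdorffEDist (s i) t) l (𝓝 0) :=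
  (ENNReal.tendsto_toReal_zero_iff fun i =>
    hausdorffEDist_ne_top_of_nonempty_of_bounded (hs i) ht (hsb i) htb).1 h

lemma isOpen_of_mem_of_finite_partition {X : Type*} [TopologicalSpace X] {𝒟 : Set (Set X)}
    {D : Set X} (hfin : 𝒟.Finite) (hcover : ⋃₀ 𝒟 = univ) (hdisj : 𝒟.PairwiseDisjoint id)
    (hclosed : ∀ E ∈ 𝒟, IsClosed E) (hD : D ∈ 𝒟) : IsOpen D := by
  have hcompl : Dᶜ = ⋃ E ∈ 𝒟 \ {D}, E := by
    ext x
    simp only [mem_compl_iff, mem_iUnion, Set.mem_sdiff, exists_prop]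
    constructor
    · intro hxD
      obtain ⟨E, hE, hxE⟩ := (hcover ▸ mem_univ x : x ∈ ⋃₀ 𝒟)
      exact ⟨E, ⟨hE, fun h => hxD (h ▸ hxE)⟩, hxE⟩
    · rintro ⟨E, ⟨hE, hED⟩, hxE⟩ hxD
      exact hED (hdisj.elim hE hD (not_disjoint_iff.2 ⟨x, hxE, hxD⟩))
  rw [← isClosed_compl_iff, hcompl]
  exact hfin.sdiff.isClosed_biUnion fun E hE => hclosed E hE.1

section Domains

variable {X : Type*} {Q : X → X → Prop} {A B C : Set X}

lemma CompleteOn.mono (h : CompleteOn Q B) (hAB : A ⊆ B) : CompleteOn Q A :=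
  fun x hx y hy => h x (hAB hx) y (hAB hy)

lemma completeOn_iff_prod_subset :
    CompleteOn Q A ↔ A ×ˢ A ⊆ {p | Q p.1 p.2} ∪ Prod.swap ⁻¹' {p | Q p.1 p.2} :=
  ⟨fun h _ hp => h _ hp.1 _ hp.2, fun h _ hx _ hy => h (mk_mem_prod hx hy)⟩

lemma MaxDomainRel.nonempty (hQ : Reflexive Q) (hA : MaxDomainRel Q B A) (hB : B.Nonempty) :
    A.Nonempty := by
  obtain ⟨b, hb⟩ := hB
  by_contra hA'
  rw [not_nonempty_iff_eq_empty] at hA'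
  have : {b} = A := hA.2.2 {b} (by simp [hA']) (singleton_subset_iff.2 hb)
    (by rintro _ rfl _ rfl; exact Or.inl (hQ _))
  simp [hA'] at this

lemma exists_maxDomainRel_superset (hAB : A ⊆ B) (hA : CompleteOn Q A) :
    ∃ M, A ⊆ M ∧ MaxDomainRel Q B M := by
  obtain ⟨M, hAM, hM⟩ := zorn_subset_nonempty {S : Set X | S ⊆ B ∧ CompleteOn Q S}
    (fun c hc hchain _ => by
      refine ⟨⋃₀ c, ⟨sUnion_subset fun S hS => (hc hS).1, ?_⟩, fun _ => subset_sUnion_of_mem⟩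
      rintro x ⟨S, hS, hxS⟩ y ⟨T, hT, hyT⟩
      rcases hchain.total hS hT with hST | hTS
      · exact (hc hT).2 x (hST hxS) y hyT
      · exact (hc hS).2 x hxS y (hTS hyT)) A ⟨hAB, hA⟩
  exact ⟨M, hAM, hM.prop.1, hM.prop.2,
    fun A' hMA' hA'B hA' => (hM.eq_of_subset ⟨hA'B, hA'⟩ hMA').symm⟩

lemma MaxDomainRel.isClosed [TopologicalSpace X] (hQ : IsClosed {p : X × X | Q p.1 p.2})
    (hB : IsClosed B) (hA : MaxDomainRel Q B A) : IsClosed A := by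
  have hcl : CompleteOn Q (closure A) := by
    rw [completeOn_iff_prod_subset, ← closure_prod_eq]
    exact closure_minimal (completeOn_iff_prod_subset.1 hA.2.1)
      (hQ.union (hQ.preimage continuous_swap))
  rw [← hA.2.2 _ subset_closure (closure_minimal hA.1 hB) hcl]
  exact isClosed_closure

end Domains

structure IsComparabilityBlocks {X : Type*} (Q : X → X → Prop) (𝒟 : Set (Set X)) : Prop where
  completeOn : ∀ D ∈ 𝒟, CompleteOn Q D
  exists_mem_of_rel : ∀ ⦃x y⦄, Q x y → ∃ D ∈ 𝒟, x ∈ D ∧ y ∈ D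

namespace IsComparabilityBlocks

variable {X : Type*} {Q : X → X → Prop} {𝒟 : Set (Set X)} {A C D : Set X}

lemma subset_of_mem (h : IsComparabilityBlocks Q 𝒟) (hdisj : 𝒟.PairwiseDisjoint id)
    (hA : CompleteOn Q A) (hD : D ∈ 𝒟) {x : X} (hxA : x ∈ A) (hxD : x ∈ D) : A ⊆ D := by
  intro y hy
  obtain ⟨E, hE, hxE, hyE⟩ : ∃ E ∈ 𝒟, x ∈ E ∧ y ∈ E := by
    rcases hA x hxA y hy with hxy | hyx
    · exact h.exists_mem_of_rel hxy
    · obtain ⟨E, hE, hyE, hxE⟩ := h.exists_mem_of_rel hyx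
      exact ⟨E, hE, hxE, hyE⟩
  rwa [← hdisj.elim hE hD (not_disjoint_iff.2 ⟨x, hxE, hxD⟩)]

lemma maxDomainRel_inter (h : IsComparabilityBlocks Q 𝒟) (hdisj : 𝒟.PairwiseDisjoint id)
    (hD : D ∈ 𝒟) (hne : (D ∩ C).Nonempty) : MaxDomainRel Q C (D ∩ C) := by
  refine ⟨inter_subset_right, (h.completeOn D hD).mono inter_subset_left,
    fun A' hDA' hA'C hA' => ?_⟩
  obtain ⟨x, hx⟩ := hne
  exact (subset_inter (h.subset_of_mem hdisj hA' hD (hDA' hx) hx.1) hA'C).antisymm hDA'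

lemma exists_eq_inter (h : IsComparabilityBlocks Q 𝒟) (hcover : ⋃₀ 𝒟 = univ)
    (hdisj : 𝒟.PairwiseDisjoint id) (hA : MaxDomainRel Q C A) (hne : A.Nonempty) :
    ∃ D ∈ 𝒟, A = D ∩ C := by
  obtain ⟨x, hx⟩ := hne
  obtain ⟨D, hD, hxD⟩ := (hcover ▸ mem_univ x : x ∈ ⋃₀ 𝒟)
  have hAD : A ⊆ D ∩ C := subset_inter (h.subset_of_mem hdisj hA.2.1 hD hx hxD) hA.1
  exact ⟨D, hD, (hA.2.2 _ hAD inter_subset_right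
    ((h.completeOn D hD).mono inter_subset_left)).symm⟩

lemma of_setOf_maxDomainRel (hQ : Reflexive Q) (h𝒟 : {A | MaxDomainRel Q univ A} = 𝒟) :
    IsComparabilityBlocks Q 𝒟 where
  completeOn D hD := (h𝒟.symm ▸ hD : D ∈ {A | MaxDomainRel Q univ A}).2.1
  exists_mem_of_rel x y hxy := by
    have hpair : CompleteOn Q {x, y} := by
      rintro a (rfl | rfl) b (rfl | rfl) <;> simp [hQ _, hxy]
    obtain ⟨M, hxyM, hM⟩ := exists_maxDomainRel_superset (subset_univ _) hpair
    exact ⟨M, h𝒟 ▸ hM, hxyM (mem_insert x _), hxyM (mem_insert_of_mem x rfl)⟩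

end IsComparabilityBlocks

section Limits

variable {X ι : Type*} [PseudoEMetricSpace X] {l : Filter ι} [l.NeBot]
  {Q : ι → X → X → Prop} {R : X → X → Prop}

lemma completeOn_of_tendsto_hausdorffEDist {A : ι → Set X} {A' : Set X}
    (hR : IsClosed {p : X × X | R p.1 p.2})
    (hQR : Tendsto (fun i => hausdorffEDist {p : X × X | Q i p.1 p.2} {p | R p.1 p.2}) l (𝓝 0))
    (hA : ∀ i, CompleteOn (Q i) (A i))
    (hAA' : Tendsto (fun i => hausdorffEDist (A i) A') l (𝓝 0)) : CompleteOn R A' := by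
  rw [completeOn_iff_prod_subset]
  refine subset_of_tendsto_hausdorffEDist (l := l) (fun i => completeOn_iff_prod_subset.1 (hA i))
    (hR.union (hR.preimage continuous_swap)) ?_ ?_
  · exact tendsto_of_tendsto_of_tendsto_of_le_of_le tendsto_const_nhds hAA'
      (fun _ => zero_le) fun _ => hausdorffEDist_prod_le.trans (max_self _).le
  · exact tendsto_of_tendsto_of_tendsto_of_le_of_le tendsto_const_nhds hQR
      (fun _ => zero_le) fun _ => hausdorffEDist_union_preimage_swap_le

lemma IsComparabilityBlocks.of_tendsto_hausdorffEDist {𝒟 : Set (Set X)}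
    (h : ∀ i, IsComparabilityBlocks (Q i) 𝒟) (hfin : 𝒟.Finite) (hclosed : ∀ D ∈ 𝒟, IsClosed D)
    (hR : IsClosed {p : X × X | R p.1 p.2})
    (hQR : Tendsto (fun i => hausdorffEDist {p : X × X | Q i p.1 p.2} {p | R p.1 p.2}) l (𝓝 0)) :
    IsComparabilityBlocks R 𝒟 where
  completeOn D hD := completeOn_of_tendsto_hausdorffEDist hR hQR (fun i => (h i).completeOn D hD)
    (by simpa only [hausdorffEDist_self] using tendsto_const_nhds)
  exists_mem_of_rel := by
    have hgraph : {p : X × X | R p.1 p.2} ⊆ ⋃ D ∈ 𝒟, D ×ˢ D :=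
      subset_of_tendsto_hausdorffEDist (l := l) (u := fun _ => ⋃ D ∈ 𝒟, D ×ˢ D)
        (fun i p hp => by
          obtain ⟨D, hD, hpD⟩ := (h i).exists_mem_of_rel hp
          exact mem_biUnion hD hpD)
        (hfin.isClosed_biUnion fun D hD => (hclosed D hD).prod (hclosed D hD)) hQR
        (by simpa only [hausdorffEDist_self] using tendsto_const_nhds)
    intro x y hxy
    obtain ⟨D, hD, hxyD⟩ := mem_iUnion₂.1 (hgraph (show (x, y) ∈ {p : X × X | R p.1 p.2} from hxy))
    exact ⟨D, hD, hxyD⟩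

lemma IsComparabilityBlocks.maxDomainRel_of_tendsto {𝒟 : Set (Set X)}
    (hcover : ⋃₀ 𝒟 = univ) (hdisj : 𝒟.PairwiseDisjoint id) (hopen : ∀ D ∈ 𝒟, IsOpen D)
    (hQ : ∀ i, IsComparabilityBlocks (Q i) 𝒟) (hR : IsComparabilityBlocks R 𝒟)
    (hRc : IsClosed {p : X × X | R p.1 p.2})
    (hQR : Tendsto (fun i => hausdorffEDist {p : X × X | Q i p.1 p.2} {p | R p.1 p.2}) l (𝓝 0))
    {K : ι → Set X} {K' : Set X} (hK' : IsClosed K')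
    (hK : Tendsto (fun i => hausdorffEDist (K i) K') l (𝓝 0))
    {D : ι → Set X} {D' : Set X} (hD' : IsClosed D') (hD'ne : D'.Nonempty)
    (hDmax : ∀ i, MaxDomainRel (Q i) (K i) (D i)) (hDne : ∀ i, (D i).Nonempty)
    (hD : Tendsto (fun i => hausdorffEDist (D i) D') l (𝓝 0)) :
    MaxDomainRel R K' D' := by
  choose B hB hDB using fun i => (hQ i).exists_eq_inter hcover hdisj (hDmax i) (hDne i)
  obtain ⟨x, hx⟩ := hD'ne
  obtain ⟨B', hB', hxB'⟩ := (hcover ▸ mem_univ x : x ∈ ⋃₀ 𝒟)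
  have hcomplete : CompleteOn R D' :=
    completeOn_of_tendsto_hausdorffEDist hRc hQR (fun i => (hDmax i).2.1) hD
  have hsub : D' ⊆ B' ∩ K' := subset_inter (hR.subset_of_mem hdisj hcomplete hB' hx hxB')
    (subset_of_tendsto_hausdorffEDist (fun i => (hDmax i).1) hK' hD hK)
  have hBev : ∀ᶠ i in l, B i = B' := by
    have := tendsto_infEDist_inter ((hopen B' hB').mem_nhds hxB') (tendsto_infEDist_of_mem hx hD)
    filter_upwards [this.eventually (gt_mem_nhds ENNReal.zero_lt_top)] with i hi
    obtain ⟨y, hyB', hyD⟩ : (B' ∩ D i).Nonempty :=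
      nonempty_iff_ne_empty.2 fun h => by simp [h] at hi
    exact hdisj.elim (hB i) hB' (not_disjoint_iff.2 ⟨y, (hDB i ▸ hyD).1, hyB'⟩)
  have hsup : B' ∩ K' ⊆ D' := by
    rintro z ⟨hzB', hzK'⟩
    refine mem_of_tendsto_infEDist hD' ((tendsto_infEDist_inter ((hopen B' hB').mem_nhds hzB')
      (tendsto_infEDist_of_mem hzK' hK)).congr' ?_) hD
    filter_upwards [hBev] with i hi
    rw [hDB i, hi]
  rw [hsub.antisymm hsup]
  exact hR.maxDomainRel_inter hdisj hB' ⟨x, hsub hx⟩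

end Limits

theorem stmt_19_general {X : Type*} [MetricSpace X]
    (Rn : ℕ → X → X → Prop) (R : X → X → Prop)
    (hrefln : ∀ n, Reflexive (Rn n))
    (hrefl : Reflexive R)
    (hclosedn : ∀ n, IsClosed {p : X × X | Rn n p.1 p.2})
    (hclosed : IsClosed {p : X × X | R p.1 p.2})
    (hRconv : Tendsto
      (fun n => EMetric.hausdorffEdist {p : X × X | Rn n p.1 p.2} {p : X × X | R p.1 p.2})
      atTop (nhds (0 : ℝ≥0∞)))
    (𝒟 : Set (Set X)) (hfin : 𝒟.Finite)
    (hcover : ⋃₀ 𝒟 = Set.univ)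
    (hdisj : ∀ A ∈ 𝒟, ∀ B ∈ 𝒟, A ≠ B → Disjoint A B)
    (hDn : ∀ n, {A : Set X | MaxDomainRel (Rn n) Set.univ A} = 𝒟)
    (K : ℕ → Set X) (Kl : Set X)
    (hKn : ∀ n, (K n).Nonempty ∧ IsCompact (K n))
    (hKl : Kl.Nonempty) (hKlc : IsCompact Kl)
    (hKconv : Tendsto (fun n => Metric.hausdorffDist (K n) Kl) atTop (nhds 0)) :
    ({A : Set X | MaxDomainRel R Kl A} =
      {A : Set X | ∃ B ∈ 𝒟, (B ∩ Kl).Nonempty ∧ A = B ∩ Kl}) ∧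
    (∀ (Ds : ℕ → Set X) (Dl : Set X), (∀ n, MaxDomainRel (Rn n) (K n) (Ds n)) →
      Dl.Nonempty → IsCompact Dl →
      Tendsto (fun n => Metric.hausdorffDist (Ds n) Dl) atTop (nhds 0) →
      MaxDomainRel R Kl Dl) := by
  have hRnR : Tendsto (fun n => hausdorffEDist {p : X × X | Rn n p.1 p.2} {p | R p.1 p.2})
      atTop (𝓝 0) := hRconv
  have hblocks n : IsComparabilityBlocks (Rn n) 𝒟 :=
    .of_setOf_maxDomainRel (hrefln n) (hDn n)
  have hclosedD : ∀ D ∈ 𝒟, IsClosed D := fun D hD =>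
    (((hDn 0).symm ▸ hD : D ∈ {A | MaxDomainRel (Rn 0) univ A})).isClosed (hclosedn 0) isClosed_univ
  have hR : IsComparabilityBlocks R 𝒟 :=
    .of_tendsto_hausdorffEDist hblocks hfin hclosedD hclosed hRnR
  refine ⟨ext fun A => ⟨fun hA => ?_, ?_⟩, fun Ds Dl hDs hDl hDlc hDconv => ?_⟩
  · obtain ⟨B, hB, rfl⟩ := hR.exists_eq_inter hcover hdisj hA (hA.nonempty hrefl hKl)
    exact ⟨B, hB, hA.nonempty hrefl hKl, rfl⟩
  · rintro ⟨B, hB, hne, rfl⟩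
    exact hR.maxDomainRel_inter hdisj hB hne
  have hDsne n : (Ds n).Nonempty := (hDs n).nonempty (hrefln n) (hKn n).1
  exact hR.maxDomainRel_of_tendsto hcover hdisj
    (fun D => isOpen_of_mem_of_finite_partition hfin hcover hdisj hclosedD) hblocks hclosed hRnR
    hKlc.isClosed
    (tendsto_hausdorffEDist_of_tendsto_hausdorffDist (fun n => (hKn n).1)
      (fun n => (hKn n).2.isBounded) hKl hKlc.isBounded hKconv)
    hDlc.isClosed hDl hDs hDsne
    (tendsto_hausdorffEDist_of_tendsto_hausdorffDist hDsne
      (fun n => (hKn n).2.isBounded.subset (hDs n).1) hDl hDlc.isBounded hDconv)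

/-- If a finite partition 𝒟* of X equals the collection of maximal
≿ₙ-domains relative to X for every n, the graphs of ≿ₙ converge to the graph of ≿,
and compact Kₙ → K, then the maximal ≿-domains relative to K are exactly the nonempty
traces D ∩ K with D ∈ 𝒟*, and every Hausdorff limit of a sequence of maximal
≿ₙ-domains relative to Kₙ is a maximal ≿-domain relative to K. -/
theorem stmt_19 {X : Type*} [MetricSpace X]
    (Rn : ℕ → X → X → Prop) (R : X → X → Prop)
    (hrefln : ∀ n, Reflexive (Rn n)) (htransn : ∀ n, Transitive (Rn n))
    (hrefl : Reflexive R) (htrans : Transitive R)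
    (hclosedn : ∀ n, IsClosed {p : X × X | Rn n p.1 p.2})
    (hclosed : IsClosed {p : X × X | R p.1 p.2})
    (hRconv : Tendsto
      (fun n => EMetric.hausdorffEdist {p : X × X | Rn n p.1 p.2} {p : X × X | R p.1 p.2})
      atTop (nhds (0 : ℝ≥0∞)))
    (𝒟 : Set (Set X)) (hfin : 𝒟.Finite)
    (hne : ∀ A ∈ 𝒟, A.Nonempty) (hcover : ⋃₀ 𝒟 = Set.univ)
    (hdisj : ∀ A ∈ 𝒟, ∀ B ∈ 𝒟, A ≠ B → Disjoint A B)
    (hDn : ∀ n, {A : Set X | MaxDomainRel (Rn n) Set.univ A} = 𝒟)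
    (K : ℕ → Set X) (Kl : Set X)
    (hKn : ∀ n, (K n).Nonempty ∧ IsCompact (K n))
    (hKl : Kl.Nonempty) (hKlc : IsCompact Kl)
    (hKconv : Tendsto (fun n => Metric.hausdorffDist (K n) Kl) atTop (nhds 0)) :
    ({A : Set X | MaxDomainRel R Kl A} =
      {A : Set X | ∃ B ∈ 𝒟, (B ∩ Kl).Nonempty ∧ A = B ∩ Kl}) ∧
    (∀ (Ds : ℕ → Set X) (Dl : Set X), (∀ n, MaxDomainRel (Rn n) (K n) (Ds n)) →
      Dl.Nonempty → IsCompact Dl →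
      Tendsto (fun n => Metric.hausdorffDist (Ds n) Dl) atTop (nhds 0) →
      MaxDomainRel R Kl Dl) :=
  stmt_19_general Rn R hrefln hrefl hclosedn hclosed hRconv 𝒟 hfin hcover hdisj hDn K Kl hKn hKl
    hKlc hKconv
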